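/- arXiv:1705.04589 — 2 statements merged into one kernel-verified Lean document; each statement's English description precedes it below -/
import Mathlib

section
/- Let A be a function from the natural numbers to the natural numbers, let i < j be natural numbers, and let k = ⌊log₂(j - i)⌋. Then the minimum of A over the closed interval [i, j] equals the smaller of the minimum of A over [i, i + 2^k - 1] and the minimum of A over [j - 2^k + 1, j]. (This is the correctness of answering a range minimum query from two overlapping dyadic intervals in the Sparse Table algorithm.) -/
/-- Sparse Table query correctness: if `i < j` and `k` is the unique natural number with
`2^k ≤ j - i < 2^(k+1)` (i.e. `k = ⌊log₂ (j - i)⌋`), then the minimum of `A` over `[i, j]`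
is the smaller of its minima over the two overlapping dyadic intervals
`[i, i + 2^k - 1]` and `[j - 2^k + 1, j]`. -/
theorem sparse_table_query_correct (A : ℕ → ℕ) (i j k : ℕ) (hij : i < j)
    (hk₁ : 2 ^ k ≤ j - i) (hk₂ : j - i < 2 ^ (k + 1)) :
    sInf (A '' Set.Icc i j) =
      min (sInf (A '' Set.Icc i (i + 2 ^ k - 1)))
        (sInf (A '' Set.Icc (j - 2 ^ k + 1) j)) := by
  have hpow : (1 : ℕ) ≤ 2 ^ k := Nat.one_le_two_pow
  have hpow2 : 2 ^ (k + 1) = 2 * 2 ^ k := by ring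
  rw [hpow2] at hk₂
  have hcover : Set.Icc i j = Set.Icc i (i + 2 ^ k - 1) ∪ Set.Icc (j - 2 ^ k + 1) j := by
    ext p
    simp only [Set.mem_Icc, Set.mem_union]
    omega
  rw [hcover, Set.image_union]
  refine csInf_union (OrderBot.bddBelow _) ?_ (OrderBot.bddBelow _) ?_
  · exact (Set.nonempty_Icc.2 (by omega)).image A
  · exact (Set.nonempty_Icc.2 (by omega)).image A
end

section
/- Let u and v be lists over an arbitrary alphabet and let r be any natural number. Then u is a contiguous factor (infix) of the rotation by r of the concatenation u ++ v, or v is a contiguous factor (infix) of that rotation. (In particular, splitting a pattern P of length m into two fragments of lengths ⌈m/2⌉ and ⌊m/2⌋, every cyclic shift of P contains at least one of the two fragments as a factor.) -/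
/-- Every rotation of `u ++ v` contains `u` or `v` as a contiguous factor (infix). -/
theorem rotation_contains_fragment {α : Type*} (u v : List α) (r : ℕ) :
    u <:+: (u ++ v).rotate r ∨ v <:+: (u ++ v).rotate r := by
  rcases eq_or_ne (u ++ v) [] with h | h
  · rcases List.append_eq_nil_iff.mp h with ⟨hu, hv⟩
    subst hu; subst hv
    left; simp
  · set w := u ++ v with hw
    have hlen : 0 < w.length := List.length_pos_iff.mpr h
    set n := r % w.length with hn
    have hnlt : n < w.length := Nat.mod_lt _ hlen
    have hrot : w.rotate r = w.drop n ++ w.take n := by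
      rw [← List.rotate_mod, ← hn, List.rotate_eq_drop_append_take hnlt.le]
    rcases le_or_gt n u.length with hle | hlt
    · right
      rw [hrot, hw, List.drop_append_of_le_length hle]
      exact ⟨u.drop n, (u ++ v).take n, by simp⟩
    · left
      rw [hrot, hw]
      have : (u ++ v).take n = u ++ v.take (n - u.length) := by
        rw [List.take_append, List.take_of_length_le hlt.le]
      rw [this]
      exact ⟨(u ++ v).drop n, v.take (n - u.length), by simp⟩
end
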